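/- Let K be a field of characteristic 2 with a discrete valuation v : Kˣ → ℤ, and let a, b, γ ∈ Kˣ and an integer n ≥ 1 be such that v(a) is even and negative, v(b) is odd and negative, v(γ) = 0, and for every u ∈ Kˣ with v(u) = 0 one has v(u² + u + γ) = 0. Then for every x₀ ∈ K with g(x₀) ≠ 0, the valuation v(g(x₀)) is even, where g(x₀) = a^{-8n}·b²·x₀² + a^{-4n}·b·x₀ + a^{1-4n} + γ. (This is the local computation at the place 𝔭 in Lemma 3.3, showing the local invariant of the Brauer class vanishes there.) -/

import Mathlib

/-- A discrete valuation on a field `K`: a surjective group homomorphism `v : Kˣ → ℤ`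
(encoded as an integer-valued function on `K`, multiplicative and surjective on nonzero
elements) satisfying `v(x + y) ≥ min (v x) (v y)`. -/
structure DiscreteVal (K : Type*) [Field K] where
  /-- the underlying valuation function (its values at `0` are irrelevant) -/
  v : K → ℤ
  map_mul : ∀ x y : K, x ≠ 0 → y ≠ 0 → v (x * y) = v x + v y
  min_le_add : ∀ x y : K, x ≠ 0 → y ≠ 0 → x + y ≠ 0 → min (v x) (v y) ≤ v (x + y)
  surjective : ∀ m : ℤ, ∃ x : K, x ≠ 0 ∧ v x = m

/-- `f(x) = a^{-4n}·b·x² + x + a·b⁻¹`. -/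
noncomputable def fDV {K : Type*} [Field K] (a b : K) (n : ℤ) (x : K) : K :=
  a ^ (-(4 * n)) * b * x ^ 2 + x + a * b⁻¹

/-- `g(x) = a^{-8n}·b²·x² + a^{-4n}·b·x + a^{1-4n} + γ`. -/
noncomputable def gDV {K : Type*} [Field K] (a b γ : K) (n : ℤ) (x : K) : K :=
  a ^ (-(8 * n)) * b ^ 2 * x ^ 2 + a ^ (-(4 * n)) * b * x + a ^ (1 - 4 * n) + γ

/-!
Write `t = a^{-4n}·b·x₀` and `s = a^{1-4n}`, so that `g(x₀) = t² + t + s + γ` with `v(s) > 0`.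
The hypothesis at `u = 1` says, since `1² + 1 = 0`, that `v(γ) = 0`. If `v(t) < 0` then `t²`
dominates and `v(g(x₀)) = 2 v(t)`; if `v(t) = 0` then `t² + t + γ` is a unit, hence so is `g(x₀)`;
if `t = 0` or `v(t) > 0` then `γ` dominates and again `v(g(x₀)) = 0`.
-/

namespace DiscreteVal

variable {K : Type*} [Field K] (w : DiscreteVal K)

lemma v_one : w.v 1 = 0 := by
  have h := w.map_mul 1 1 one_ne_zero one_ne_zero
  rw [mul_one] at h
  omega

lemma v_inv {x : K} (hx : x ≠ 0) : w.v x⁻¹ = -w.v x := by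
  have h := w.map_mul x x⁻¹ hx (inv_ne_zero hx)
  rw [mul_inv_cancel₀ hx, w.v_one] at h
  omega

lemma v_zpow {x : K} (hx : x ≠ 0) (m : ℤ) : w.v (x ^ m) = m * w.v x := by
  induction m using Int.induction_on with
  | zero => simpa using w.v_one
  | succ k ih =>
    rw [zpow_add_one₀ hx, w.map_mul _ _ (zpow_ne_zero _ hx) hx, ih]
    ring
  | pred k ih =>
    rw [zpow_sub_one₀ hx, w.map_mul _ _ (zpow_ne_zero _ hx) (inv_ne_zero hx), ih, w.v_inv hx]
    ring

lemma v_sq {x : K} (hx : x ≠ 0) : w.v (x ^ 2) = 2 * w.v x := by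
  rw [sq, w.map_mul x x hx hx]
  ring

lemma v_neg_one : w.v (-1) = 0 := by
  have h := w.map_mul (-1) (-1) (neg_ne_zero.2 one_ne_zero) (neg_ne_zero.2 one_ne_zero)
  rw [neg_one_mul, neg_neg, w.v_one] at h
  omega

lemma v_neg {x : K} (hx : x ≠ 0) : w.v (-x) = w.v x := by
  rw [neg_eq_neg_one_mul, w.map_mul _ _ (neg_ne_zero.2 one_ne_zero) hx, w.v_neg_one, zero_add]

lemma add_ne_zero_of_v_lt {x y : K} (hx : x ≠ 0) (h : w.v x < w.v y) : x + y ≠ 0 := by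
  intro hxy
  rw [eq_neg_of_add_eq_zero_right hxy, w.v_neg hx] at h
  exact lt_irrefl _ h

lemma v_add_of_v_lt {x y : K} (hx : x ≠ 0) (h : w.v x < w.v y) : w.v (x + y) = w.v x := by
  rcases eq_or_ne y 0 with rfl | hy
  · rw [add_zero]
  have hxy := w.add_ne_zero_of_v_lt hx h
  have h₁ := w.min_le_add x y hx hy hxy
  -- `x = (x + y) + (-y)` bounds `v x` below by `min (v (x + y)) (v y)`
  have h₂ := w.min_le_add (x + y) (-y) hxy (neg_ne_zero.2 hy) (by rwa [add_neg_cancel_right])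
  rw [add_neg_cancel_right, w.v_neg hy] at h₂
  omega

lemma v_sq_add_self_add_of_v_neg {t c : K} (ht : t ≠ 0) (hneg : w.v t < 0) (hc : 0 ≤ w.v c) :
    w.v (t ^ 2 + t + c) = 2 * w.v t := by
  have htc : w.v (t + c) = w.v t := w.v_add_of_v_lt ht (by omega)
  rw [add_assoc, w.v_add_of_v_lt (pow_ne_zero 2 ht) (by rw [w.v_sq ht, htc]; omega), w.v_sq ht]

lemma pos_v_sq_add_self_add {t s : K} (ht : t ≠ 0) (hpos : 0 < w.v t) (hs : s ≠ 0)
    (hvs : 0 < w.v s) (hts : t ^ 2 + t + s ≠ 0) : 0 < w.v (t ^ 2 + t + s) := by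
  have hlt : w.v t < w.v (t ^ 2) := by rw [w.v_sq ht]; omega
  have htt : w.v (t ^ 2 + t) = w.v t := by rw [add_comm]; exact w.v_add_of_v_lt ht hlt
  have hne : t ^ 2 + t ≠ 0 := by rw [add_comm]; exact w.add_ne_zero_of_v_lt ht hlt
  have hmin := w.min_le_add (t ^ 2 + t) s hne hs hts
  omega

variable [CharP K 2]

lemma v_eq_zero_of_forall_v_sq_add_self_add {γ : K}
    (hunit : ∀ u : K, u ≠ 0 → w.v u = 0 → u ^ 2 + u + γ ≠ 0 ∧ w.v (u ^ 2 + u + γ) = 0) :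
    γ ≠ 0 ∧ w.v γ = 0 := by
  simpa [CharTwo.add_self_eq_zero] using hunit 1 one_ne_zero w.v_one

theorem even_v_sq_add_self_add_add {γ s : K}
    (hunit : ∀ u : K, u ≠ 0 → w.v u = 0 → u ^ 2 + u + γ ≠ 0 ∧ w.v (u ^ 2 + u + γ) = 0)
    (hs : s ≠ 0) (hvs : 0 < w.v s) {t : K} (hg : t ^ 2 + t + s + γ ≠ 0) :
    Even (w.v (t ^ 2 + t + s + γ)) := by
  obtain ⟨hγ0, hγ⟩ := w.v_eq_zero_of_forall_v_sq_add_self_add hunit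
  have hsγ : w.v (s + γ) = 0 := by
    rw [add_comm, w.v_add_of_v_lt hγ0 (by omega), hγ]
  rcases eq_or_ne t 0 with rfl | ht
  · simp [hsγ]
  rcases lt_trichotomy (w.v t) 0 with hneg | hzero | hpos
  · rw [add_assoc, w.v_sq_add_self_add_of_v_neg ht hneg hsγ.ge]
    exact even_two_mul _
  · obtain ⟨hne, hv⟩ := hunit t ht hzero
    rw [add_right_comm, w.v_add_of_v_lt hne (by omega), hv]
    exact Even.zero
  · rcases eq_or_ne (t ^ 2 + t + s) 0 with hts | hts
    · rw [hts, zero_add, hγ]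
      exact Even.zero
    have hvts := w.pos_v_sq_add_self_add ht hpos hs hvs hts
    rw [add_comm, w.v_add_of_v_lt hγ0 (by omega), hγ]
    exact Even.zero

end DiscreteVal

lemma gDV_eq {K : Type*} [Field K] (a b γ : K) (n : ℤ) (x : K) :
    gDV a b γ n x = (a ^ (-(4 * n)) * b * x) ^ 2 + a ^ (-(4 * n)) * b * x + a ^ (1 - 4 * n) + γ := by
  have hsq : a ^ (-(8 * n)) = (a ^ (-(4 * n))) ^ (2 : ℤ) := by rw [← zpow_mul]; ring_nf
  rw [gDV, hsq, zpow_two]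
  ring

theorem val_g_even_at_p_general (K : Type*) [Field K] [CharP K 2] (w : DiscreteVal K)
    (a b γ : K) (ha0 : a ≠ 0) (n : ℤ) (hn : 1 ≤ n)
    (haNeg : w.v a < 0)
    (hunit : ∀ u : K, u ≠ 0 → w.v u = 0 →
      u ^ 2 + u + γ ≠ 0 ∧ w.v (u ^ 2 + u + γ) = 0) :
    ∀ x₀ : K, gDV a b γ n x₀ ≠ 0 → Even (w.v (gDV a b γ n x₀)) := by
  intro x₀ hg
  have hs : 0 < w.v (a ^ (1 - 4 * n)) := by
    rw [w.v_zpow ha0]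
    nlinarith
  rw [gDV_eq] at hg ⊢
  exact w.even_v_sq_add_self_add_add hunit (zpow_ne_zero _ ha0) hs hg

/-- The local computation at the place `𝔭` in Lemma 3.3: under the stated conditions (in
particular, `u² + u + γ` is a unit for every unit `u`), `v(g(x₀))` is even for every `x₀`. -/
theorem val_g_even_at_p (K : Type*) [Field K] [CharP K 2] (w : DiscreteVal K)
    (a b γ : K) (ha0 : a ≠ 0) (hb0 : b ≠ 0) (hγ0 : γ ≠ 0) (n : ℤ) (hn : 1 ≤ n)
    (haEven : Even (w.v a)) (haNeg : w.v a < 0)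
    (hbOdd : Odd (w.v b)) (hbNeg : w.v b < 0)
    (hγ : w.v γ = 0)
    (hunit : ∀ u : K, u ≠ 0 → w.v u = 0 →
      u ^ 2 + u + γ ≠ 0 ∧ w.v (u ^ 2 + u + γ) = 0) :
    ∀ x₀ : K, gDV a b γ n x₀ ≠ 0 → Even (w.v (gDV a b γ n x₀)) :=
  val_g_even_at_p_general K w a b γ ha0 n hn haNeg hunit
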